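/- In the SIR-type model, if the initial values S(0), E(0), I(0), R(0) are nonnegative and β, σ, γ ≥ 0, N > 0, then all compartments remain nonnegative for all t ≥ 0. -/

import Mathlib

/-!
The SEIR vector field is quasi-positive with a linear margin: on `[0, t]`, if one compartment
equals `-δ` while all of them are `≥ -δ`, its derivative is at least `-K δ`, where `K` depends
on a bound `C` for `S` and `I` on `[0, t]` (the only nonlinear term, `β I S / N`, is then
`≥ -β C δ / N`). A barrier `-ε e^{c (u - t)}` with `c > K` falls faster than that, so no
compartment can ever touch it; letting `ε → 0` gives nonnegativity.
-/

open Set Filter Topology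

theorem HasDerivWithinAt.eventually_nhdsGT_lt_of_pos {f : ℝ → ℝ} {f' x : ℝ}
    (hf : HasDerivWithinAt f f' (Ici x) x) (hf' : 0 < f') : ∀ᶠ y in 𝓝[>] x, f x < f y := by
  have hslope : ∀ᶠ y in 𝓝[>] x, 0 < slope f x y :=
    ((hasDerivWithinAt_iff_tendsto_slope' (lt_irrefl x)).1 hf.Ioi_of_Ici).eventually
      (eventually_gt_nhds hf')
  filter_upwards [hslope, self_mem_nhdsWithin] with y hy hxy using (slope_pos_iff hxy).1 hy

theorem forall_boundary_le_of_deriv_boundary_lt_deriv_right {ι : Type*} [Finite ι]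
    {x x' : ι → ℝ → ℝ} {B B' : ℝ → ℝ} {a b : ℝ}
    (hx : ∀ i, ContinuousOn (x i) (Icc a b))
    (hx' : ∀ i, ∀ t ∈ Ico a b, HasDerivWithinAt (x i) (x' i t) (Ici t) t)
    (hB : ContinuousOn B (Icc a b)) (hB' : ∀ t ∈ Ico a b, HasDerivWithinAt B (B' t) (Ici t) t)
    (ha : ∀ i, B a ≤ x i a)
    (bound : ∀ t ∈ Ico a b, (∀ j, B t ≤ x j t) → ∀ i, x i t = B t → B' t < x' i t) :
    ∀ t ∈ Icc a b, ∀ i, B t ≤ x i t := by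
  set s := {t | ∀ i, B t ≤ x i t}
  have hs : IsClosed (s ∩ Icc a b) := by
    rw [inter_comm]
    exact isClosed_Icc.isClosed_le (continuousOn_pi.2 fun _ => hB) (continuousOn_pi.2 hx)
  refine fun t ht => hs.Icc_subset_of_forall_mem_nhdsWithin ha ?_ ht
  rintro t ⟨hBt, htab⟩
  have hIcc : Icc a b ∈ 𝓝[>] t := Icc_mem_nhdsGT_of_mem htab
  refine eventually_all.2 fun i => ?_
  rcases (hBt i).lt_or_eq with hlt | heq
  · have hcont : ∀ f : ℝ → ℝ, ContinuousOn f (Icc a b) → Tendsto f (𝓝[>] t) (𝓝 (f t)) :=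
      fun f hf => (hf t (Ico_subset_Icc_self htab)).mono_of_mem_nhdsWithin hIcc
    exact ((hcont B hB).eventually_lt (hcont (x i) (hx i)) hlt).mono fun _ => le_of_lt
  · have hgap := ((hx' i t htab).sub (hB' t htab)).eventually_nhdsGT_lt_of_pos
      (sub_pos.2 (bound t htab hBt i heq.symm))
    filter_upwards [hgap] with u hu
    have : x i t - B t < x i u - B u := hu
    linarith

theorem nonneg_of_quasiPositive {ι : Type*} [Finite ι] {x x' : ι → ℝ → ℝ} {a b K : ℝ}
    (hx : ∀ i, ContinuousOn (x i) (Icc a b))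
    (hx' : ∀ i, ∀ t ∈ Ico a b, HasDerivWithinAt (x i) (x' i t) (Ici t) t)
    (ha : ∀ i, 0 ≤ x i a)
    (hK : ∀ t ∈ Ico a b, ∀ δ > 0, (∀ j, -δ ≤ x j t) → ∀ i, x i t = -δ → -(K * δ) ≤ x' i t) :
    ∀ t ∈ Icc a b, ∀ i, 0 ≤ x i t := by
  intro t ht i
  refine le_of_forall_pos_le_add fun ε hε => ?_
  set c := |K| + 1
  set B : ℝ → ℝ := fun u => -(ε * Real.exp (c * (u - b)))
  have hB : ∀ u, HasDerivAt B (c * B u) u := fun u => by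
    refine ((((hasDerivAt_id u).sub_const b).const_mul c).exp.const_mul ε).neg.congr_deriv ?_
    simp only [B, id]
    ring
  have hbarrier := forall_boundary_le_of_deriv_boundary_lt_deriv_right hx hx'
    (fun u _ => (hB u).continuousAt.continuousWithinAt) (fun u _ => (hB u).hasDerivWithinAt)
    (fun j => (neg_nonpos.2 (by positivity)).trans (ha j)) (fun u hu hBu j hj => by
      have hδ : 0 < ε * Real.exp (c * (u - b)) := by positivity
      have hKc : K < c := (le_abs_self K).trans_lt (lt_add_one _)
      have := hK u hu _ hδ hBu j hj
      nlinarith) t ht i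
  have hexp : Real.exp (c * (t - b)) ≤ 1 :=
    Real.exp_le_one_iff.2 (mul_nonpos_of_nonneg_of_nonpos (by positivity) (by linarith [ht.2]))
  have : -ε ≤ B t := by simp only [B]; nlinarith
  linarith

theorem neg_mul_le_mul_of_mem_Icc {α : Type*} [CommRing α] [LinearOrder α]
    [IsStrictOrderedRing α] {x y δ C : α} (hδ : 0 ≤ δ) (hC : 0 ≤ C) (hx : x ∈ Icc (-δ) C)
    (hy : y ∈ Icc (-δ) C) : -(C * δ) ≤ x * y := by
  obtain ⟨hx₁, hx₂⟩ := hx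
  obtain ⟨hy₁, hy₂⟩ := hy
  rcases le_total 0 x with h | h <;> rcases le_total 0 y with h' | h' <;> nlinarith

-- coordinates `(S, E, I, R)`
noncomputable def seirField (β σ γ N : ℝ) (v : Fin 4 → ℝ) : Fin 4 → ℝ :=
  ![-(β * v 2 / N) * v 0, β * v 2 / N * v 0 - σ * v 1, σ * v 1 - γ * v 2, γ * v 2]

theorem seirField_quasiPositive {β σ γ N C δ : ℝ} (hβ : 0 ≤ β) (hσ : 0 ≤ σ) (hγ : 0 ≤ γ)
    (hN : 0 < N) (hδ : 0 < δ) {v : Fin 4 → ℝ} (hvC : ‖v‖ ≤ C) (hv : ∀ j, -δ ≤ v j) (i : Fin 4)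
    (hi : v i = -δ) : -((β * C / N + σ + γ) * δ) ≤ seirField β σ γ N v i := by
  have hvC' : ∀ j, |v j| ≤ C := fun j => (norm_le_pi_norm v j).trans hvC
  have hC : 0 ≤ C := (abs_nonneg _).trans (hvC' 0)
  have hIS : -(C * δ) ≤ v 2 * v 0 := neg_mul_le_mul_of_mem_Icc hδ.le hC
    ⟨hv 2, (le_abs_self _).trans (hvC' 2)⟩ ⟨hv 0, (le_abs_self _).trans (hvC' 0)⟩
  have hβN : 0 ≤ β / N := div_nonneg hβ hN.le
  have hσδ := mul_nonneg hσ hδ.le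
  have hγδ := mul_nonneg hγ hδ.le
  have hβCδ : 0 ≤ β / N * (C * δ) := mul_nonneg hβN (mul_nonneg hC hδ.le)
  simp only [seirField, mul_div_right_comm β]
  fin_cases i <;> dsimp at hi ⊢
  · rw [hi]
    nlinarith [mul_le_mul_of_nonneg_left
      (mul_le_mul_of_nonneg_right (neg_le_of_abs_le (hvC' 2)) hδ.le) hβN]
  · nlinarith [mul_le_mul_of_nonneg_left hIS hβN]
  · nlinarith [mul_le_mul_of_nonneg_left (hv 1) hσ]
  · nlinarith [mul_le_mul_of_nonneg_left (hv 2) hγ]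

/-- In the SEIR model with nonnegative initial data and nonnegative parameters, all
compartments remain nonnegative for all t ≥ 0. -/
theorem seir_nonnegativity
    (S E I R : ℝ → ℝ) (β σ γ N : ℝ)
    (hβ : 0 ≤ β) (hσ : 0 ≤ σ) (hγ : 0 ≤ γ) (hNpos : 0 < N)
    (hS : ∀ t ∈ Set.Ici (0 : ℝ), HasDerivAt S (-(β * I t / N) * S t) t)
    (hE : ∀ t ∈ Set.Ici (0 : ℝ), HasDerivAt E ((β * I t / N) * S t - σ * E t) t)
    (hI : ∀ t ∈ Set.Ici (0 : ℝ), HasDerivAt I (σ * E t - γ * I t) t)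
    (hR : ∀ t ∈ Set.Ici (0 : ℝ), HasDerivAt R (γ * I t) t)
    (hS0 : 0 ≤ S 0) (hE0 : 0 ≤ E 0) (hI0 : 0 ≤ I 0) (hR0 : 0 ≤ R 0) :
    ∀ t ∈ Set.Ici (0 : ℝ), 0 ≤ S t ∧ 0 ≤ E t ∧ 0 ≤ I t ∧ 0 ≤ R t := by
  intro t ht
  set x : Fin 4 → ℝ → ℝ := ![S, E, I, R]
  have hx' : ∀ i, ∀ u ∈ Ici (0 : ℝ), HasDerivAt (x i) (seirField β σ γ N (fun j => x j u) i) u := by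
    intro i u hu
    fin_cases i
    exacts [hS u hu, hE u hu, hI u hu, hR u hu]
  have hx : ∀ i, ContinuousOn (x i) (Icc 0 t) :=
    fun i u hu => (hx' i u hu.1).continuousAt.continuousWithinAt
  obtain ⟨C, hC⟩ := isCompact_Icc.exists_bound_of_continuousOn (continuousOn_pi.2 hx)
  have key := nonneg_of_quasiPositive hx (fun i u hu => (hx' i u hu.1).hasDerivWithinAt)
    (by intro i; fin_cases i <;> assumption)
    (fun u hu δ hδ => seirField_quasiPositive hβ hσ hγ hNpos hδ (hC u (Ico_subset_Icc_self hu)))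
    t ⟨ht, le_rfl⟩
  exact ⟨key 0, key 1, key 2, key 3⟩
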